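/- arXiv:1001.0409 — 2 statements merged into one kernel-verified Lean document; each statement's English description precedes it below -/
import Mathlib

section
/- Let F be a finite field with q elements, let n be a positive integer, and let E be a finite field extension of F with |E| = q^n. Then the number of elements α of E whose minimal polynomial over F has degree n equals n times the number of monic irreducible polynomials of degree n over F (i.e., |R_n| = n·|P_n|). -/
/-!
Sending `α` to its minimal polynomial maps `R_n` onto `P_n`, and the fibre over `p` is the set of
roots of `p` in `E`. Since `deg p = n`, `p` divides `X ^ q ^ n - X`, which splits in `E`; as `p` is
separable over the perfect field `F`, it has exactly `n` roots there.
-/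

open Polynomial

theorem Nat.card_eq_card_mul_of_card_fiber_eq {α β : Type*} [Finite α] {f : α → β} {m : ℕ}
    (hm : m ≠ 0) (h : ∀ b, Nat.card {a // f a = b} = m) : Nat.card α = Nat.card β * m := by
  have hf : Function.Surjective f := fun b ↦ by
    obtain ⟨⟨a, ha⟩⟩ := (Nat.card_ne_zero.mp ((h b).symm ▸ hm)).1
    exact ⟨a, ha⟩
  have := Finite.of_surjective f hf
  have := Fintype.ofFinite β
  rw [Nat.card_congr (Equiv.sigmaFiberEquiv f).symm, Nat.card_sigma]
  simp [h]

theorem minpoly_eq_iff_mem_rootSet {F E : Type*} [Field F] [CommRing E] [IsDomain E]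
    [Algebra F E] {p : F[X]} (hm : p.Monic) (hi : Irreducible p) {α : E} :
    minpoly F α = p ↔ α ∈ p.rootSet E := by
  rw [mem_rootSet_of_ne hi.ne_zero]
  exact ⟨fun h ↦ h ▸ minpoly.aeval F α,
    fun h ↦ (minpoly.eq_of_irreducible_of_monic hi h hm).symm⟩

theorem natCard_minpoly_eq {F E : Type*} [Field F] [Field E] [Algebra F E] {p : F[X]}
    (hm : p.Monic) (hi : Irreducible p) (hsep : p.Separable)
    (hsplit : Splits (p.map (algebraMap F E))) :
    Nat.card {α : E // minpoly F α = p} = p.natDegree := by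
  rw [Nat.card_congr (Equiv.subtypeEquivRight fun α ↦ minpoly_eq_iff_mem_rootSet hm hi),
    Nat.card_eq_fintype_card, card_rootSet_eq_natDegree hsep hsplit]

theorem FiniteField.splits_map_of_natDegree_dvd {F E : Type*} [Field F] [Finite F] [Field E]
    [Fintype E] [Algebra F E] {n : ℕ} (hE : Fintype.card E = Nat.card F ^ n) {p : F[X]}
    (hi : Irreducible p) (hd : p.natDegree ∣ n) : Splits (p.map (algebraMap F E)) := by
  have hdvd : p ∣ X ^ Fintype.card E - X := by
    rw [hE]
    exact hi.natDegree_dvd_iff_dvd_X_pow_card_pow_sub_X.mp hd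
  refine Splits.of_dvd (FiniteField.isSplittingField_sub E F).splits ?_ (Polynomial.map_dvd _ hdvd)
  exact map_ne_zero (FiniteField.X_pow_card_sub_X_ne_zero F Fintype.one_lt_card)

/-- If `E/F` is a finite field extension with `|F| = q` and `|E| = q^n`, then the number of
`α ∈ E` whose minimal polynomial over `F` has degree `n` is `n` times the number of monic
irreducible polynomials of degree `n` over `F`. -/
theorem card_roots_eq_n_mul_card_irreducible (F E : Type*) [Field F] [Fintype F]
    [Field E] [Fintype E] [Algebra F E] (q n : ℕ) (hq : q = Fintype.card F) (hn : 0 < n)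
    (hE : Fintype.card E = q ^ n) :
    Nat.card {α : E // (minpoly F α).natDegree = n} =
      n * Nat.card {p : F[X] // p.Monic ∧ Irreducible p ∧ p.natDegree = n} := by
  subst hq
  have hcardE : Fintype.card E = Nat.card F ^ n := by rw [hE, Nat.card_eq_fintype_card]
  let toMinpoly (α : {α : E // (minpoly F α).natDegree = n}) :
      {p : F[X] // p.Monic ∧ Irreducible p ∧ p.natDegree = n} :=
    ⟨minpoly F α.1, minpoly.monic (.of_finite F _), minpoly.irreducible (.of_finite F _), α.2⟩
  have hfiber : ∀ p, Nat.card {α // toMinpoly α = p} = n := by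
    rintro ⟨p, hm, hi, hd⟩
    have hsplit := FiniteField.splits_map_of_natDegree_dvd hcardE hi (hd ▸ dvd_rfl)
    have e : {α // toMinpoly α = ⟨p, hm, hi, hd⟩} ≃ {α : E // minpoly F α = p} :=
      (Equiv.subtypeEquivRight fun _ ↦ Subtype.ext_iff).trans
        (Equiv.subtypeSubtypeEquivSubtype (q := fun α ↦ minpoly F α = p) fun h ↦ h ▸ hd)
    rw [Nat.card_congr e,
      natCard_minpoly_eq hm hi (PerfectField.separable_of_irreducible hi) hsplit, hd]
  rw [Nat.card_eq_card_mul_of_card_fiber_eq hn.ne' hfiber, mul_comm]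
end

section
/- Let F be a finite field with q elements, let n be a positive integer, and let E be a finite field extension of F with |E| = q^n. Then the number of elements α of E whose minimal polynomial over F has degree n equals ∑_{d∣n} μ(n/d)·q^d, where the sum is over all positive divisors d of n and μ is the Möbius function (i.e., |R_n| = ∑_{d∣n} μ(n/d)·q^d). -/
/-!
An element `α ∈ E` has `deg (minpoly F α) ∣ d` exactly when `minpoly F α` divides
`X ^ q ^ d - X`, i.e. when `α ^ q ^ d = α`. For `d ∣ n` the polynomial `X ^ q ^ d - X` divides
`X ^ q ^ n - X = ∏_{a ∈ E} (X - a)`, so it has exactly `q ^ d` roots in `E`. Sorting these roots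
by degree gives `∑_{e ∣ d} |R_e| = q ^ d` for every `d ∣ n`, and Möbius inversion yields
`|R_n|`.
-/

open Polynomial Finset

namespace FiniteField

theorem card_filter_isRoot_of_dvd_X_pow_card_sub_X {K : Type*} [Field K] [Fintype K]
    [DecidableEq K] {P : K[X]} (hP : P ∣ X ^ Fintype.card K - X) :
    #{x | P.IsRoot x} = P.natDegree := by
  have hX : (X ^ Fintype.card K - X : K[X]) ≠ 0 :=
    FiniteField.X_pow_card_sub_X_ne_zero K Fintype.one_lt_card
  have hP0 : P ≠ 0 := ne_zero_of_dvd_ne_zero hX hP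
  have hroots : P.roots ≤ univ.val :=
    FiniteField.roots_X_pow_card_sub_X K ▸ roots.le_of_dvd hX hP
  have hsplits : Splits P := by
    refine Splits.of_dvd (splits_iff_card_roots.mpr ?_) hX hP
    rw [FiniteField.roots_X_pow_card_sub_X, FiniteField.X_pow_card_sub_X_natDegree_eq K
      Fintype.one_lt_card, card_val, card_univ]
  have hfilter : ({x | P.IsRoot x} : Finset K) = P.roots.toFinset := by
    ext x; simp [hP0]
  rw [hfilter, Multiset.toFinset_card_of_nodup (Multiset.nodup_of_le hroots univ.nodup),
    hsplits.natDegree_eq_card_roots]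

theorem card_filter_pow_pow_eq_self {E : Type*} [Field E] [Fintype E] [DecidableEq E]
    {q n d : ℕ} (hq : 1 < q) (hE : Fintype.card E = q ^ n) (hd : d ∣ n) (hd0 : d ≠ 0) :
    #{x : E | x ^ q ^ d = x} = q ^ d := by
  have hdvd : (X ^ q ^ d - X : E[X]) ∣ X ^ Fintype.card E - X :=
    hE ▸ dvd_pow_pow_sub_self_of_dvd hd
  have hroots := card_filter_isRoot_of_dvd_X_pow_card_sub_X hdvd
  rw [X_pow_card_pow_sub_X_natDegree_eq E hd0 hq] at hroots
  simpa [sub_eq_zero] using hroots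

theorem natDegree_minpoly_dvd_iff {F E : Type*} [Field F] [Finite F] [Field E]
    [Algebra F E] {α : E} (hα : IsIntegral F α) (d : ℕ) :
    (minpoly F α).natDegree ∣ d ↔ α ^ Nat.card F ^ d = α := by
  rw [(minpoly.irreducible hα).natDegree_dvd_iff_dvd_X_pow_card_pow_sub_X, minpoly.dvd_iff]
  simp [sub_eq_zero]

end FiniteField

theorem Finset.card_filter_dvd_eq_sum_divisors {ι : Type*} [Fintype ι] (f : ι → ℕ) {d : ℕ}
    (hd : d ≠ 0) : #{i | f i ∣ d} = ∑ e ∈ d.divisors, #{i | f i = e} := by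
  classical
  rw [card_eq_sum_card_fiberwise (f := f) (t := d.divisors) fun i hi ↦
    Nat.mem_divisors.mpr ⟨(mem_filter.mp hi).2, hd⟩]
  refine sum_congr rfl fun e he ↦ ?_
  rw [filter_filter]
  congr 1; ext i; simp only [mem_filter, mem_univ, true_and, and_iff_right_iff_imp]
  rintro rfl
  exact Nat.dvd_of_mem_divisors he

open ArithmeticFunction ArithmeticFunction.Moebius in
theorem ArithmeticFunction.eq_sum_moebius_mul_of_sum_divisors_eq {R : Type*} [NonAssocRing R]
    {f g : ℕ → R} {n : ℕ} (hn : n ≠ 0)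
    (h : ∀ d, d ∣ n → ∑ e ∈ d.divisors, f e = g d) :
    f n = ∑ d ∈ n.divisors, (μ (n / d) : R) * g d := by
  have := (sum_eq_iff_sum_mul_moebius_eq_on {d | d ∣ n} fun _ _ h₁ h₂ ↦ h₁.trans h₂).mp
    (fun d _ hd ↦ h d hd) n (Nat.pos_of_ne_zero hn) dvd_rfl
  rw [← this, Nat.sum_divisorsAntidiagonal' fun i j ↦ (μ i : R) * g j]

theorem card_degree_n_elements_general (F E : Type*) [Field F] [Fintype F]
    [Field E] [Fintype E] [Algebra F E] (q n : ℕ) (hq : q = Fintype.card F)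
    (hE : Fintype.card E = q ^ n) :
    (Nat.card {α : E // (minpoly F α).natDegree = n} : ℤ) =
      ∑ d ∈ n.divisors, (ArithmeticFunction.moebius (n / d)) * (q : ℤ) ^ d := by
  classical
  have hq1 : 1 < q := hq ▸ Fintype.one_lt_card
  have hn : n ≠ 0 := by
    rintro rfl
    exact (Fintype.one_lt_card (α := E)).ne' (by rw [hE, pow_zero])
  have hcount : ∀ d, d ∣ n →
      ∑ e ∈ d.divisors, (Nat.card {α : E // (minpoly F α).natDegree = e} : ℤ) = q ^ d := by
    intro d hd
    have hd0 : d ≠ 0 := ne_zero_of_dvd_ne_zero hn hd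
    have hdeg : ∀ α : E, (minpoly F α).natDegree ∣ d ↔ α ^ q ^ d = α := fun α ↦ by
      rw [FiniteField.natDegree_minpoly_dvd_iff (.of_finite F α), hq, Nat.card_eq_fintype_card]
    simp only [Nat.card_eq_fintype_card, Fintype.card_subtype]
    rw [← Nat.cast_sum, ← card_filter_dvd_eq_sum_divisors _ hd0]
    simp only [hdeg]
    exact_mod_cast FiniteField.card_filter_pow_pow_eq_self hq1 hE hd hd0
  exact ArithmeticFunction.eq_sum_moebius_mul_of_sum_divisors_eq hn hcount

/-- If `E/F` is a finite field extension with `|F| = q` and `|E| = q^n`, then the number of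
`α ∈ E` whose minimal polynomial over `F` has degree `n` is `∑_{d ∣ n} μ(n/d) * q^d`. -/
theorem card_degree_n_elements (F E : Type*) [Field F] [Fintype F]
    [Field E] [Fintype E] [Algebra F E] (q n : ℕ) (hq : q = Fintype.card F) (hn : 0 < n)
    (hE : Fintype.card E = q ^ n) :
    (Nat.card {α : E // (minpoly F α).natDegree = n} : ℤ) =
      ∑ d ∈ n.divisors, (ArithmeticFunction.moebius (n / d)) * (q : ℤ) ^ d :=
  card_degree_n_elements_general F E q n hq hE
end
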